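/- Let G be a group, let G₀ and A be subgroups, let I be a normal subgroup of G, and suppose A ≤ I. Let Gₙ = ⟨G₀, A⟩. Then Gₙ ∩ I = ⟨G₀ ∩ I, k a k⁻¹ : k ∈ G₀, a ∈ A⟩; that is, the subgroup of Gₙ ∩ I generated by G₀ ∩ I together with all G₀-conjugates of elements of A equals Gₙ ∩ I. -/

import Mathlib

/-!
The subgroup `C` generated by the `G₀`-conjugates of `A` is normalized by `G₀`, contains `A`
and lies in `I`. Hence `⟨G₀, A⟩ = G₀ ⊔ C = G₀ C` as sets, and Dedekind's modular law
`G₀ C ∩ I = (G₀ ∩ I) C` for `C ≤ I` gives the claim.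
-/

namespace Subgroup

variable {G : Type*} [Group G]

theorem sup_inf_eq_inf_sup_of_le_normalizer {H C I : Subgroup G} (hCI : C ≤ I)
    (hH : H ≤ normalizer C) : (H ⊔ C) ⊓ I = H ⊓ I ⊔ C := by
  refine SetLike.coe_injective ?_
  rw [coe_inf, coe_mul_of_left_le_normalizer_right _ _ hH,
    coe_mul_of_left_le_normalizer_right _ _ (inf_le_left.trans hH), inf_comm H,
    inf_mul_assoc _ _ _ hCI, Set.inter_comm]

def conjugatesBy (H A : Subgroup G) : Set G :=
  {x | ∃ k ∈ H, ∃ a ∈ A, x = k * a * k⁻¹}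

theorem le_normalizer_closure_conjugatesBy (H A : Subgroup G) :
    H ≤ normalizer (closure (conjugatesBy H A)) := by
  refine le_normalizer_closure_iff.mpr ?_
  rintro h hh _ ⟨k, hk, a, ha, rfl⟩
  exact subset_closure ⟨h * k, mul_mem hh hk, a, ha, by group⟩

theorem sup_closure_conjugatesBy (H A : Subgroup G) :
    H ⊔ closure (conjugatesBy H A) = H ⊔ A := by
  refine le_antisymm (sup_le le_sup_left ?_) (sup_le_sup_left ?_ H)
  · rw [closure_le]
    rintro _ ⟨k, hk, a, ha, rfl⟩
    exact mul_mem (mul_mem (mem_sup_left hk) (mem_sup_right ha)) (inv_mem (mem_sup_left hk))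
  · exact fun a ha => subset_closure ⟨1, one_mem H, a, ha, by group⟩

theorem closure_conjugatesBy_le_of_normal {A I : Subgroup G} [I.Normal] (hA : A ≤ I)
    (H : Subgroup G) : closure (conjugatesBy H A) ≤ I := by
  rw [closure_le]
  rintro _ ⟨k, -, a, ha, rfl⟩
  exact ‹I.Normal›.conj_mem a (hA ha) k

end Subgroup

/-- For a group `G` with subgroups `G₀`, `A` and a normal subgroup `I`
with `A ≤ I`, the intersection of `Gₙ := ⟨G₀, A⟩` with `I` equals the subgroup generated
by `G₀ ∩ I` together with all `G₀`-conjugates of elements of `A`. -/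
theorem subgroup_sup_inf_normal_eq {G : Type*} [Group G] (G₀ A I : Subgroup G)
    [I.Normal] (hA : A ≤ I) :
    (G₀ ⊔ A) ⊓ I =
      (G₀ ⊓ I) ⊔ Subgroup.closure {x : G | ∃ k ∈ G₀, ∃ a ∈ A, x = k * a * k⁻¹} := by
  rw [← Subgroup.sup_closure_conjugatesBy G₀ A]
  exact Subgroup.sup_inf_eq_inf_sup_of_le_normalizer
    (Subgroup.closure_conjugatesBy_le_of_normal hA G₀)
    (Subgroup.le_normalizer_closure_conjugatesBy G₀ A)
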